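/- arXiv:2006.06769 — 2 statements merged into one kernel-verified Lean document; each statement's English description precedes it below -/
import Mathlib

section
/- Let r̄₁ = s·r₁ and r̄₂ = s·r₂ where s ∈ [0, s̄] and r₁, r₂ are the first two rows of a rotation matrix R ∈ SO(3). Then ‖r̄₁‖² = ‖r̄₂‖² = s², r̄₁ᵀr̄₂ = 0, and 1 − (‖r̄₁‖² + ‖r̄₂‖²)/(2s̄²) ≥ 0. Conversely, if vectors r̄₁, r̄₂ ∈ ℝ³ satisfy ‖r̄₁‖² = ‖r̄₂‖², r̄₁ᵀr̄₂ = 0, and ‖r̄₁‖² + ‖r̄₂‖² ≤ 2s̄², then there exist s ∈ [0, s̄] and R ∈ SO(3) with r̄₁ = s·r₁ and r̄₂ = s·r₂ for the first two rows r₁, r₂ of R. -/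
/-!
The rows of an orthogonal matrix are orthonormal, which gives the forward direction. Conversely,
`a = r̄₁ / s` and `b = r̄₂ / s` with `s = ‖r̄₁‖` are orthonormal, and completing them by `a ⨯₃ b`
yields a matrix of determinant `(a ⨯₃ b) ⬝ᵥ (a ⨯₃ b) = ‖a‖²‖b‖² - (a ⬝ᵥ b)² = 1`
(the triple product and Lagrange's identity). When `s = 0` both vectors vanish and any rotation works.
-/

open Matrix

section Orthogonal

variable {n α : Type*} [Fintype n] [DecidableEq n] [CommRing α]

lemma transpose_mul_self_eq_one_iff {R : Matrix n n α} :
    Rᵀ * R = 1 ↔ ∀ i k, R i ⬝ᵥ R k = if i = k then 1 else 0 := by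
  rw [mul_eq_one_comm, ← Matrix.ext_iff]
  exact forall₂_congr fun i k => by rw [mul_apply', one_apply]; rfl

lemma sum_smul_row_mul_smul_row {R : Matrix n n α} (hR : Rᵀ * R = 1) (s : α) (i k : n) :
    ∑ j, (s * R i j) * (s * R k j) = if i = k then s ^ 2 else 0 := by
  have h := congrArg (s ^ 2 * ·) (transpose_mul_self_eq_one_iff.mp hR i k)
  simp only [dotProduct, Finset.mul_sum, mul_ite, mul_one, mul_zero] at h
  rw [← h]
  exact Finset.sum_congr rfl fun j _ => by ring

lemma sum_smul_row_sq {R : Matrix n n α} (hR : Rᵀ * R = 1) (s : α) (i : n) :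
    ∑ j, (s * R i j) ^ 2 = s ^ 2 := by
  simpa only [sq, if_true] using sum_smul_row_mul_smul_row hR s i i

end Orthogonal

lemma exists_rotation_rows_eq {α : Type*} [CommRing α] {a b : Fin 3 → α} (ha : a ⬝ᵥ a = 1)
    (hb : b ⬝ᵥ b = 1) (hab : a ⬝ᵥ b = 0) :
    ∃ R : Matrix (Fin 3) (Fin 3) α, Rᵀ * R = 1 ∧ R.det = 1 ∧ R 0 = a ∧ R 1 = b := by
  have hcc : a ⨯₃ b ⬝ᵥ a ⨯₃ b = 1 := by simp [cross_dot_cross, ha, hb, hab]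
  refine ⟨![a, b, a ⨯₃ b], transpose_mul_self_eq_one_iff.mpr ?_, ?_, rfl, rfl⟩
  · intro i k
    fin_cases i <;> fin_cases k <;>
      simp [ha, hb, hab, hcc, dotProduct_comm b a, dot_self_cross, dot_cross_self,
        dotProduct_comm (a ⨯₃ b)]
  · rw [← hcc, triple_product_permutation, triple_product_eq_det]

lemma exists_rotation_rows_eq_smul {u v : Fin 3 → ℝ} {s : ℝ} (hs : s ^ 2 = u ⬝ᵥ u)
    (huv : u ⬝ᵥ u = v ⬝ᵥ v) (h : u ⬝ᵥ v = 0) :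
    ∃ R : Matrix (Fin 3) (Fin 3) ℝ, Rᵀ * R = 1 ∧ R.det = 1 ∧ u = s • R 0 ∧ v = s • R 1 := by
  rcases eq_or_ne s 0 with rfl | hs0
  · have hu : u = 0 := dotProduct_self_eq_zero.mp (by rw [← hs]; ring)
    have hv : v = 0 := dotProduct_self_eq_zero.mp (by rw [← huv, ← hs]; ring)
    exact ⟨1, by simp, by simp, by simp [hu], by simp [hv]⟩
  · obtain ⟨R, hR, hdet, hR0, hR1⟩ := exists_rotation_rows_eq (a := s⁻¹ • u) (b := s⁻¹ • v)
      (by simp only [smul_dotProduct, dotProduct_smul, smul_eq_mul, ← hs]; field_simp)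
      (by simp only [smul_dotProduct, dotProduct_smul, smul_eq_mul, ← huv, ← hs]; field_simp)
      (by simp [h])
    refine ⟨R, hR, hdet, ?_, ?_⟩
    · rw [hR0, smul_smul, mul_inv_cancel₀ hs0, one_smul]
    · rw [hR1, smul_smul, mul_inv_cancel₀ hs0, one_smul]

theorem stmt_16 (sbar : ℝ) (hsbar : 0 < sbar) :
    (∀ s : ℝ, 0 ≤ s → s ≤ sbar →
      ∀ R : Matrix (Fin 3) (Fin 3) ℝ, Rᵀ * R = 1 → R.det = 1 →
        (∑ j, (s * R 0 j) ^ 2 = s ^ 2) ∧ (∑ j, (s * R 1 j) ^ 2 = s ^ 2) ∧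
        (∑ j, (s * R 0 j) * (s * R 1 j) = 0) ∧
        0 ≤ 1 - ((∑ j, (s * R 0 j) ^ 2) + ∑ j, (s * R 1 j) ^ 2) / (2 * sbar ^ 2)) ∧
    (∀ rb1 rb2 : Fin 3 → ℝ,
      (∑ j, (rb1 j) ^ 2 = ∑ j, (rb2 j) ^ 2) →
      (∑ j, rb1 j * rb2 j = 0) →
      ((∑ j, (rb1 j) ^ 2) + ∑ j, (rb2 j) ^ 2 ≤ 2 * sbar ^ 2) →
      ∃ (s : ℝ) (R : Matrix (Fin 3) (Fin 3) ℝ),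
        0 ≤ s ∧ s ≤ sbar ∧ Rᵀ * R = 1 ∧ R.det = 1 ∧
        (∀ j, rb1 j = s * R 0 j) ∧ (∀ j, rb2 j = s * R 1 j)) := by
  refine ⟨fun s hs0 hs R hR _ => ?_, fun u v huv h hle => ?_⟩
  · rw [sum_smul_row_sq hR, sum_smul_row_sq hR, sum_smul_row_mul_smul_row hR]
    refine ⟨rfl, rfl, if_neg (by decide), ?_⟩
    rw [sub_nonneg, div_le_one (by positivity)]
    linarith [pow_le_pow_left₀ hs0 hs 2]
  · have hsq (w : Fin 3 → ℝ) : ∑ j, w j ^ 2 = w ⬝ᵥ w := by simp only [dotProduct, sq]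
    rw [hsq, hsq] at huv hle
    change u ⬝ᵥ v = 0 at h
    obtain ⟨R, hR, hdet, hu, hv⟩ := exists_rotation_rows_eq_smul
      (Real.sq_sqrt (dotProduct_self_star_nonneg u)) huv h
    refine ⟨√(u ⬝ᵥ u), R, Real.sqrt_nonneg _, ?_, hR, hdet, congrFun hu, congrFun hv⟩
    rw [Real.sqrt_le_left hsbar.le]
    linarith
end

section
/- Let K ⊆ ℝᵐ be a nonempty closed convex cone and 𝒜 = {d : Ad = b} a nonempty affine subspace, and consider the Douglas–Rachford iteration d_{τ+1} = d_τ + γ_τ(proj_𝒜(2·proj_K(d_τ) − d_τ) − proj_K(d_τ)) with 0 < γ_τ < 2 fixed (γ_τ = γ). If K ∩ 𝒜 ≠ ∅, then the sequence (d_τ) converges, and proj_K of its limit lies in K ∩ 𝒜. -/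
/-!
Reflectors `2 P - id` of metric projections onto convex sets are nonexpansive, so the
Douglas–Rachford step is the Krasnoselskii–Mann averaging `d ↦ d + (γ/2) (N d - d)` of the
nonexpansive map `N = R_𝒜 ∘ R_K`, every point of `K ∩ 𝒜` being a fixed point of `N`. The iterates
are Fejér monotone with respect to the fixed points of `N` and their displacement `N d - d` tends
to zero, so a cluster point `L` (which exists by compactness) is a fixed point to which the whole
sequence converges. Finally `N L = L` says exactly `proj_𝒜 (R_K L) = proj_K L`, whence
`proj_K L ∈ 𝒜`.
-/

open Matrix RealInnerProductSpace Filter Topology Function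

def IsMetricProjection {X : Type*} [PseudoMetricSpace X] (C : Set X) (P : X → X) : Prop :=
  ∀ x, P x ∈ C ∧ ∀ y ∈ C, dist x (P x) ≤ dist x y

def reflector {F : Type*} [AddCommGroup F] [Module ℝ F] (P : F → F) (x : F) : F :=
  (2 : ℝ) • P x - x

namespace IsMetricProjection

theorem eq_of_mem {X : Type*} [MetricSpace X] {C : Set X} {P : X → X}
    (hP : IsMetricProjection C P) {x : X} (hx : x ∈ C) : P x = x := by
  simpa [dist_comm, eq_comm] using (hP x).2 x hx

variable {F : Type*} [NormedAddCommGroup F] [InnerProductSpace ℝ F] {C : Set F} {P : F → F}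

theorem inner_sub_nonpos (hP : IsMetricProjection C P) (hC : Convex ℝ C) (x : F) {w : F}
    (hw : w ∈ C) : ⟪x - P x, w - P x⟫ ≤ 0 := by
  refine (norm_eq_iInf_iff_real_inner_le_zero hC (hP x).1).1 ?_ w hw
  have : Nonempty C := ⟨⟨w, hw⟩⟩
  have hbdd : BddBelow (Set.range fun y : C => ‖x - y‖) := ⟨0, by rintro _ ⟨y, rfl⟩; positivity⟩
  refine le_antisymm (le_ciInf fun y => ?_) (ciInf_le hbdd ⟨P x, (hP x).1⟩)
  simpa [dist_eq_norm] using (hP x).2 y y.2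

/-- Metric projections onto convex sets are firmly nonexpansive. -/
theorem norm_sub_sq_le_inner (hP : IsMetricProjection C P) (hC : Convex ℝ C) (x y : F) :
    ‖P x - P y‖ ^ 2 ≤ ⟪x - y, P x - P y⟫ := by
  have hx := hP.inner_sub_nonpos hC x (hP y).1
  have hy := hP.inner_sub_nonpos hC y (hP x).1
  have split : ⟪x - y, P x - P y⟫ =
      ‖P x - P y‖ ^ 2 - ⟪x - P x, P y - P x⟫ - ⟪y - P y, P x - P y⟫ := by
    rw [← real_inner_self_eq_norm_sq, ← neg_sub (P x) (P y), inner_neg_right]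
    simp only [inner_sub_left, inner_sub_right, real_inner_comm]
    ring
  linarith

theorem lipschitzWith_reflector (hP : IsMetricProjection C P) (hC : Convex ℝ C) :
    LipschitzWith 1 (reflector P) := by
  refine LipschitzWith.of_dist_le_mul fun x y => ?_
  rw [NNReal.coe_one, one_mul, dist_eq_norm, dist_eq_norm]
  refine le_of_pow_le_pow_left₀ two_ne_zero (norm_nonneg _) ?_
  have expand : ‖reflector P x - reflector P y‖ ^ 2 =
      4 * (‖P x - P y‖ ^ 2 - ⟪x - y, P x - P y⟫) + ‖x - y‖ ^ 2 := by
    have : reflector P x - reflector P y = (2 : ℝ) • (P x - P y) - (x - y) := by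
      simp only [reflector]; module
    rw [this, ← real_inner_self_eq_norm_sq, ← real_inner_self_eq_norm_sq,
      ← real_inner_self_eq_norm_sq]
    simp only [inner_sub_left, inner_sub_right, real_inner_smul_left, real_inner_smul_right,
      real_inner_comm (x - y)]
    ring
  linarith [hP.norm_sub_sq_le_inner hC x y]

end IsMetricProjection

section KrasnoselskiiMann

variable {F : Type*} [NormedAddCommGroup F] [InnerProductSpace ℝ F]

theorem norm_add_smul_sub_sq (α : ℝ) (a c : F) :
    ‖a + α • (c - a)‖ ^ 2 = (1 - α) * ‖a‖ ^ 2 + α * ‖c‖ ^ 2 - α * (1 - α) * ‖c - a‖ ^ 2 := by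
  simp only [← real_inner_self_eq_norm_sq, inner_add_left, inner_add_right, inner_sub_left,
    inner_sub_right, real_inner_smul_left, real_inner_smul_right, real_inner_comm a c]
  ring

theorem norm_add_smul_sub_sub_sq_add_le {N : F → F} (hN : LipschitzWith 1 N) {w : F}
    (hw : IsFixedPt N w) {α : ℝ} (hα : 0 ≤ α) (x : F) :
    ‖x + α • (N x - x) - w‖ ^ 2 + α * (1 - α) * ‖N x - x‖ ^ 2 ≤ ‖x - w‖ ^ 2 := by
  have hNx : ‖N x - w‖ ≤ ‖x - w‖ := by
    simpa [dist_eq_norm, hw.eq] using hN.dist_le_mul x w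
  have step : x + α • (N x - x) - w = (x - w) + α • ((N x - w) - (x - w)) := by module
  rw [step, norm_add_smul_sub_sq, sub_sub_sub_cancel_right]
  nlinarith [pow_le_pow_left₀ (norm_nonneg _) hNx 2]

variable {N : F → F} {α : ℝ} {u : ℕ → F}

theorem antitone_dist_of_krasnoselskiiMann (hN : LipschitzWith 1 N) (hα0 : 0 ≤ α)
    (hα1 : α ≤ 1) (hu : ∀ n, u (n + 1) = u n + α • (N (u n) - u n)) {w : F}
    (hw : IsFixedPt N w) : Antitone fun n => dist (u n) w := by
  refine antitone_nat_of_succ_le fun n => ?_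
  rw [dist_eq_norm, dist_eq_norm, hu]
  refine le_of_pow_le_pow_left₀ two_ne_zero (norm_nonneg _) ?_
  have := norm_add_smul_sub_sub_sq_add_le hN hw hα0 (u n)
  nlinarith [mul_nonneg (mul_nonneg hα0 (sub_nonneg.2 hα1)) (sq_nonneg ‖N (u n) - u n‖)]

/-- Asymptotic regularity of the Krasnoselskii–Mann iteration. -/
theorem tendsto_sub_of_krasnoselskiiMann (hN : LipschitzWith 1 N) (hα0 : 0 < α) (hα1 : α < 1)
    (hu : ∀ n, u (n + 1) = u n + α • (N (u n) - u n)) {w : F} (hw : IsFixedPt N w) :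
    Tendsto (fun n => N (u n) - u n) atTop (𝓝 0) := by
  set a : ℕ → ℝ := fun n => ‖u n - w‖ ^ 2
  have hc : 0 < α * (1 - α) := mul_pos hα0 (sub_pos.2 hα1)
  have ha : Antitone a := fun m n hmn => by
    simpa [a, dist_eq_norm] using pow_le_pow_left₀ dist_nonneg
      (antitone_dist_of_krasnoselskiiMann hN hα0.le hα1.le hu hw hmn) 2
  have hlim := tendsto_atTop_ciInf ha ⟨0, by rintro _ ⟨n, rfl⟩; positivity⟩
  have hdecr : Tendsto (fun n => (a n - a (n + 1)) / (α * (1 - α))) atTop (𝓝 0) := by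
    simpa using (hlim.sub (hlim.comp (tendsto_add_atTop_nat 1))).div_const _
  have hsq : Tendsto (fun n => ‖N (u n) - u n‖ ^ 2) atTop (𝓝 0) := by
    refine squeeze_zero (fun n => by positivity) (fun n => ?_) hdecr
    rw [le_div_iff₀ hc, mul_comm]
    have := norm_add_smul_sub_sub_sq_add_le hN hw hα0.le (u n)
    simp only [a, hu n]
    linarith
  rw [tendsto_zero_iff_norm_tendsto_zero]
  simpa using hsq.sqrt

theorem exists_isFixedPt_tendsto_of_krasnoselskiiMann [ProperSpace F] (hN : LipschitzWith 1 N)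
    (hfix : ∃ w, IsFixedPt N w) (hα0 : 0 < α) (hα1 : α < 1)
    (hu : ∀ n, u (n + 1) = u n + α • (N (u n) - u n)) :
    ∃ L, IsFixedPt N L ∧ Tendsto u atTop (𝓝 L) := by
  obtain ⟨w, hw⟩ := hfix
  have hanti (v : F) (hv : IsFixedPt N v) : Antitone fun n => dist (u n) v :=
    antitone_dist_of_krasnoselskiiMann hN hα0.le hα1.le hu hv
  obtain ⟨L, -, φ, hφ, hsub⟩ := tendsto_subseq_of_bounded (Metric.isBounded_closedBall)
    fun n => Metric.mem_closedBall.2 (hanti w hw (Nat.zero_le n))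
  have hφ' := hφ.tendsto_atTop
  have hL : IsFixedPt N L := by
    refine tendsto_nhds_unique ((hN.continuous.tendsto L).comp hsub) ?_
    have hdisp := (tendsto_sub_of_krasnoselskiiMann hN hα0 hα1 hu hw).comp hφ'
    simpa [comp_def] using hsub.add hdisp
  refine ⟨L, hL, ?_⟩
  rw [tendsto_iff_dist_tendsto_zero] at hsub ⊢
  exact (tendsto_iff_tendsto_subseq_of_antitone (hanti L hL) hφ').2 hsub

end KrasnoselskiiMann

section DouglasRachford

variable {F : Type*} [AddCommGroup F] [Module ℝ F]

theorem reflector_reflector_sub (PK PA : F → F) (x : F) :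
    reflector PA (reflector PK x) - x = (2 : ℝ) • (PA (reflector PK x) - PK x) := by
  simp only [reflector]
  module

theorem isFixedPt_reflector_comp_reflector_iff {PK PA : F → F} {x : F} :
    IsFixedPt (reflector PA ∘ reflector PK) x ↔ PA (reflector PK x) = PK x := by
  rw [IsFixedPt, ← sub_eq_zero, Function.comp_apply, reflector_reflector_sub, smul_eq_zero,
    sub_eq_zero]
  simp

end DouglasRachford

theorem convex_setOf_mulVec_eq {m k : ℕ} (A : Matrix (Fin k) (Fin m) ℝ) (b : Fin k → ℝ) :
    Convex ℝ {x : EuclideanSpace ℝ (Fin m) | A *ᵥ x = b} :=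
  (convex_singleton b).is_linear_preimage
    (f := fun x : EuclideanSpace ℝ (Fin m) => A *ᵥ x)
    ⟨fun x y => by simp [mulVec_add], fun c x => by simp [mulVec_smul]⟩

theorem stmt_17_general {m k : ℕ} (K : Set (EuclideanSpace ℝ (Fin m)))
    (hKconvex : Convex ℝ K)
    (Amat : Matrix (Fin k) (Fin m) ℝ) (b : Fin k → ℝ)
    (projK projA : EuclideanSpace ℝ (Fin m) → EuclideanSpace ℝ (Fin m))
    (hprojK : ∀ x, projK x ∈ K ∧ ∀ y ∈ K, dist x (projK x) ≤ dist x y)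
    (hprojA : ∀ x, Amat.mulVec (projA x) = b ∧
      ∀ y : EuclideanSpace ℝ (Fin m), Amat.mulVec y = b → dist x (projA x) ≤ dist x y)
    (γ : ℝ) (hγ0 : 0 < γ) (hγ2 : γ < 2)
    (d : ℕ → EuclideanSpace ℝ (Fin m))
    (hiter : ∀ τ, d (τ + 1) = d τ + γ • (projA ((2 : ℝ) • projK (d τ) - d τ) - projK (d τ)))
    (hinter : (K ∩ {x : EuclideanSpace ℝ (Fin m) | Amat.mulVec x = b}).Nonempty) :
    ∃ L, Filter.Tendsto d Filter.atTop (nhds L) ∧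
      projK L ∈ K ∩ {x : EuclideanSpace ℝ (Fin m) | Amat.mulVec x = b} := by
  have hK : IsMetricProjection K projK := hprojK
  have hA : IsMetricProjection {x : EuclideanSpace ℝ (Fin m) | Amat.mulVec x = b} projA := hprojA
  have hN : LipschitzWith 1 (reflector projA ∘ reflector projK) := by
    simpa using (hA.lipschitzWith_reflector (convex_setOf_mulVec_eq Amat b)).comp
      (hK.lipschitzWith_reflector hKconvex)
  obtain ⟨z, hzK, hzA⟩ := hinter
  have hz : IsFixedPt (reflector projA ∘ reflector projK) z := by
    have hRz : reflector projK z = z := by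
      simp only [reflector, hK.eq_of_mem hzK]
      module
    rw [isFixedPt_reflector_comp_reflector_iff, hRz, hA.eq_of_mem hzA, hK.eq_of_mem hzK]
  have hd (τ : ℕ) : d (τ + 1) =
      d τ + (γ / 2) • ((reflector projA ∘ reflector projK) (d τ) - d τ) := by
    rw [hiter, Function.comp_apply, reflector_reflector_sub, smul_smul,
      div_mul_cancel₀ γ two_ne_zero]
    rfl
  obtain ⟨L, hL, hdL⟩ := exists_isFixedPt_tendsto_of_krasnoselskiiMann hN ⟨z, hz⟩
    (by positivity) (by linarith) hd
  refine ⟨L, hdL, (hK L).1, ?_⟩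
  rw [← isFixedPt_reflector_comp_reflector_iff.1 hL]
  exact (hA _).1

theorem stmt_17 {m k : ℕ} (K : Set (EuclideanSpace ℝ (Fin m)))
    (hKne : K.Nonempty) (hKclosed : IsClosed K) (hKconvex : Convex ℝ K)
    (hKcone : ∀ c : ℝ, 0 ≤ c → ∀ x ∈ K, c • x ∈ K)
    (Amat : Matrix (Fin k) (Fin m) ℝ) (b : Fin k → ℝ)
    (hAne : {x : EuclideanSpace ℝ (Fin m) | Amat.mulVec x = b}.Nonempty)
    (projK projA : EuclideanSpace ℝ (Fin m) → EuclideanSpace ℝ (Fin m))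
    (hprojK : ∀ x, projK x ∈ K ∧ ∀ y ∈ K, dist x (projK x) ≤ dist x y)
    (hprojA : ∀ x, Amat.mulVec (projA x) = b ∧
      ∀ y : EuclideanSpace ℝ (Fin m), Amat.mulVec y = b → dist x (projA x) ≤ dist x y)
    (γ : ℝ) (hγ0 : 0 < γ) (hγ2 : γ < 2)
    (d : ℕ → EuclideanSpace ℝ (Fin m))
    (hiter : ∀ τ, d (τ + 1) = d τ + γ • (projA ((2 : ℝ) • projK (d τ) - d τ) - projK (d τ)))
    (hinter : (K ∩ {x : EuclideanSpace ℝ (Fin m) | Amat.mulVec x = b}).Nonempty) :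
    ∃ L, Filter.Tendsto d Filter.atTop (nhds L) ∧
      projK L ∈ K ∩ {x : EuclideanSpace ℝ (Fin m) | Amat.mulVec x = b} :=
  stmt_17_general K hKconvex Amat b projK projA hprojK hprojA γ hγ0 hγ2 d hiter hinter
end
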